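/- (DMTS, χ, ≤) with modal refinement ≤ is a behavioral specification theory for LTS adequate for bisimilarity: defining I ⊨ D iff χ(I) ≤ D, every χ(I) is a characteristic formula for I, and the induced equivalence Th(I₁) = Th(I₂) coincides with bisimilarity of I₁ and I₂. -/

import Mathlib

/-! The must-sets of `chi I` are the singletons of transitions of `I`, so a relation is a modal
refinement `chi I₁ ≤ chi I₂` exactly when it is a bisimulation between `I₁` and `I₂`. Since `≤`
is a preorder, `chi I ∈ Th(I)` and `Th(I₂) ⊆ Th(I₁)` whenever `chi I₁ ≤ chi I₂`; hence
`Th(I₁) = Th(I₂)` holds iff `chi I₁ ≤ chi I₂` and `chi I₂ ≤ chi I₁`, i.e. iff `I₁` and `I₂` are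
bisimilar. -/

/-- A labeled transition system over a finite alphabet `A`:
finitely many states, an initial state, and labeled transitions. -/
structure LTS (A : Type) [Fintype A] where
  St : Type
  fin : Fintype St
  init : St
  tr : St → A → St → Prop

/-- A disjunctive modal transition system over a finite alphabet `A`. -/
structure DMTS (A : Type) [Fintype A] where
  St : Type
  fin : Fintype St
  init : Set St
  may : St → A → St → Prop
  must : St → Set (A × St) → Prop
  consistent : ∀ s N, must s N → ∀ a t, (a, t) ∈ N → may s a t

variable {A : Type} [Fintype A]

/-- `R` is a modal refinement of `D₁` into `D₂`. -/
def IsModalRefinement (D₁ D₂ : DMTS A) (R : D₁.St → D₂.St → Prop) : Prop :=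
  (∀ s₁ ∈ D₁.init, ∃ s₂ ∈ D₂.init, R s₁ s₂) ∧
  ∀ s₁ s₂, R s₁ s₂ →
    (∀ a t₁, D₁.may s₁ a t₁ → ∃ t₂, D₂.may s₂ a t₂ ∧ R t₁ t₂) ∧
    (∀ N₂, D₂.must s₂ N₂ → ∃ N₁, D₁.must s₁ N₁ ∧
      ∀ a t₁, (a, t₁) ∈ N₁ → ∃ t₂, (a, t₂) ∈ N₂ ∧ R t₁ t₂)

/-- Modal refinement `D₁ ≤ D₂`. -/
def dmtsLe (D₁ D₂ : DMTS A) : Prop := ∃ R, IsModalRefinement D₁ D₂ R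

/-- The standard embedding of LTS into DMTS. -/
def chi (I : LTS A) : DMTS A where
  St := I.St
  fin := I.fin
  init := {I.init}
  may := I.tr
  must := fun s N => ∃ a t, I.tr s a t ∧ N = {(a, t)}
  consistent := by
    rintro s N ⟨a, t, htr, rfl⟩ a' t' ht'
    simp only [Set.mem_singleton_iff, Prod.mk.injEq] at ht'
    obtain ⟨rfl, rfl⟩ := ht'
    exact htr

/-- `R` is a bisimulation between the LTS `I₁` and `I₂`. -/
def IsBisimulation (I₁ I₂ : LTS A) (R : I₁.St → I₂.St → Prop) : Prop :=
  R I₁.init I₂.init ∧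
  ∀ s₁ s₂, R s₁ s₂ →
    (∀ a t₁, I₁.tr s₁ a t₁ → ∃ t₂, I₂.tr s₂ a t₂ ∧ R t₁ t₂) ∧
    (∀ a t₂, I₂.tr s₂ a t₂ → ∃ t₁, I₁.tr s₁ a t₁ ∧ R t₁ t₂)

/-- `I₁` and `I₂` are bisimilar. -/
def Bisimilar (I₁ I₂ : LTS A) : Prop := ∃ R, IsBisimulation I₁ I₂ R

/-- `R` is a simulation of LTS `I₁` into `I₂`. -/
def IsSimulation (I₁ I₂ : LTS A) (R : I₁.St → I₂.St → Prop) : Prop :=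
  R I₁.init I₂.init ∧
  ∀ s₁ s₂, R s₁ s₂ → ∀ a t₁, I₁.tr s₁ a t₁ → ∃ t₂, I₂.tr s₂ a t₂ ∧ R t₁ t₂

/-- `(R₁, R₂)` is a simulation refinement of `D₁` into `D₂`. -/
def IsSimRefinement (D₁ D₂ : DMTS A) (R₁ R₂ : D₁.St → D₂.St → Prop) : Prop :=
  (∀ s₁ ∈ D₁.init, ∃ s₂ ∈ D₂.init, R₁ s₁ s₂) ∧
  (∀ s₂ ∈ D₂.init, ∃ s₁ ∈ D₁.init, R₂ s₁ s₂) ∧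
  (∀ s₁ s₂, R₁ s₁ s₂ → ∀ a t₁, D₁.may s₁ a t₁ → ∃ t₂, D₂.may s₂ a t₂ ∧ R₁ t₁ t₂) ∧
  (∀ s₁ s₂, R₂ s₁ s₂ → ∀ N₂, D₂.must s₂ N₂ → ∃ N₁, D₁.must s₁ N₁ ∧
    ∀ a t₁, (a, t₁) ∈ N₁ → ∃ t₂, (a, t₂) ∈ N₂ ∧ R₂ t₁ t₂)

/-- Simulation refinement `D₁ ≲ D₂`. -/
def dmtsSimLe (D₁ D₂ : DMTS A) : Prop := ∃ R₁ R₂, IsSimRefinement D₁ D₂ R₁ R₂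

theorem dmtsLe_refl (D : DMTS A) : dmtsLe D D :=
  ⟨Eq, fun s hs => ⟨s, hs, rfl⟩, by
    rintro s _ rfl
    exact ⟨fun _ t h => ⟨t, h, rfl⟩, fun N hN => ⟨N, hN, fun _ t ht => ⟨t, ht, rfl⟩⟩⟩⟩

theorem IsModalRefinement.comp {D₁ D₂ D₃ : DMTS A} {R : D₁.St → D₂.St → Prop}
    {S : D₂.St → D₃.St → Prop} (hR : IsModalRefinement D₁ D₂ R)
    (hS : IsModalRefinement D₂ D₃ S) : IsModalRefinement D₁ D₃ (Relation.Comp R S) := by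
  refine ⟨fun s₁ hs₁ => ?_, fun s₁ s₃ ⟨s₂, hR₁₂, hS₂₃⟩ => ⟨fun a t₁ ht₁ => ?_, fun N₃ hN₃ => ?_⟩⟩
  · obtain ⟨s₂, hs₂, hR₁₂⟩ := hR.1 s₁ hs₁
    obtain ⟨s₃, hs₃, hS₂₃⟩ := hS.1 s₂ hs₂
    exact ⟨s₃, hs₃, s₂, hR₁₂, hS₂₃⟩
  · obtain ⟨t₂, ht₂, hRt⟩ := (hR.2 s₁ s₂ hR₁₂).1 a t₁ ht₁
    obtain ⟨t₃, ht₃, hSt⟩ := (hS.2 s₂ s₃ hS₂₃).1 a t₂ ht₂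
    exact ⟨t₃, ht₃, t₂, hRt, hSt⟩
  · obtain ⟨N₂, hN₂, hN₂₃⟩ := (hS.2 s₂ s₃ hS₂₃).2 N₃ hN₃
    obtain ⟨N₁, hN₁, hN₁₂⟩ := (hR.2 s₁ s₂ hR₁₂).2 N₂ hN₂
    refine ⟨N₁, hN₁, fun a t₁ ht₁ => ?_⟩
    obtain ⟨t₂, ht₂, hRt⟩ := hN₁₂ a t₁ ht₁
    obtain ⟨t₃, ht₃, hSt⟩ := hN₂₃ a t₂ ht₂
    exact ⟨t₃, ht₃, t₂, hRt, hSt⟩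

theorem dmtsLe_trans {D₁ D₂ D₃ : DMTS A} : dmtsLe D₁ D₂ → dmtsLe D₂ D₃ → dmtsLe D₁ D₃
  | ⟨_, hR⟩, ⟨_, hS⟩ => ⟨_, hR.comp hS⟩

theorem IsBisimulation.symm {I₁ I₂ : LTS A} {R : I₁.St → I₂.St → Prop}
    (h : IsBisimulation I₁ I₂ R) : IsBisimulation I₂ I₁ (flip R) :=
  ⟨h.1, fun s₂ s₁ hR => (h.2 s₁ s₂ hR).symm⟩

theorem Bisimilar.symm {I₁ I₂ : LTS A} : Bisimilar I₁ I₂ → Bisimilar I₂ I₁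
  | ⟨_, h⟩ => ⟨_, h.symm⟩

theorem chi_must_clause_iff {I₁ I₂ : LTS A} (R : I₁.St → I₂.St → Prop) (s₁ : I₁.St)
    (s₂ : I₂.St) :
    (∀ N₂, (chi I₂).must s₂ N₂ → ∃ N₁, (chi I₁).must s₁ N₁ ∧
      ∀ a t₁, (a, t₁) ∈ N₁ → ∃ t₂, (a, t₂) ∈ N₂ ∧ R t₁ t₂) ↔
    ∀ a t₂, I₂.tr s₂ a t₂ → ∃ t₁, I₁.tr s₁ a t₁ ∧ R t₁ t₂ := by
  constructor
  · intro h a t₂ htr₂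
    obtain ⟨_, ⟨a', t₁, htr₁, rfl⟩, hmatch⟩ := h {(a, t₂)} ⟨a, t₂, htr₂, rfl⟩
    obtain ⟨t₂', heq, hR⟩ := hmatch a' t₁ rfl
    obtain ⟨rfl, rfl⟩ := Prod.mk.inj heq
    exact ⟨t₁, htr₁, hR⟩
  · rintro h _ ⟨a, t₂, htr₂, rfl⟩
    obtain ⟨t₁, htr₁, hR⟩ := h a t₂ htr₂
    refine ⟨{(a, t₁)}, ⟨a, t₁, htr₁, rfl⟩, fun a' t₁' heq => ?_⟩
    obtain ⟨rfl, rfl⟩ := Prod.mk.inj heq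
    exact ⟨t₂, rfl, hR⟩

theorem chi_init_clause_iff {I₁ I₂ : LTS A} (R : I₁.St → I₂.St → Prop) :
    (∀ s₁ ∈ (chi I₁).init, ∃ s₂ ∈ (chi I₂).init, R s₁ s₂) ↔ R I₁.init I₂.init := by
  refine ⟨fun h => ?_, fun h s₁ hs₁ => ⟨I₂.init, rfl, ?_⟩⟩
  · obtain ⟨_, rfl, hR⟩ := h I₁.init rfl
    exact hR
  · obtain rfl : s₁ = I₁.init := hs₁
    exact h

theorem isModalRefinement_chi_iff {I₁ I₂ : LTS A} (R : I₁.St → I₂.St → Prop) :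
    IsModalRefinement (chi I₁) (chi I₂) R ↔ IsBisimulation I₁ I₂ R :=
  and_congr (chi_init_clause_iff R) <| forall₂_congr fun s₁ s₂ =>
    imp_congr_right fun _ => and_congr_right' (chi_must_clause_iff R s₁ s₂)

theorem chi_le_chi_iff {I₁ I₂ : LTS A} : dmtsLe (chi I₁) (chi I₂) ↔ Bisimilar I₁ I₂ :=
  exists_congr isModalRefinement_chi_iff

/-- `Th(I)`, reading `I ⊨ D` as `chi I ≤ D`. -/
def th (I : LTS A) : Set (DMTS A) := {D | dmtsLe (chi I) D}

theorem chi_mem_th (I : LTS A) : chi I ∈ th I :=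
  dmtsLe_refl (chi I)

theorem th_subset_th_of_chi_le {I₁ I₂ : LTS A} (h : dmtsLe (chi I₁) (chi I₂)) :
    th I₂ ⊆ th I₁ :=
  fun _ => dmtsLe_trans h

theorem th_eq_th_iff {I₁ I₂ : LTS A} : th I₁ = th I₂ ↔ Bisimilar I₁ I₂ := by
  refine ⟨fun h => chi_le_chi_iff.1 ?_, fun h => ?_⟩
  · change chi I₂ ∈ th I₁
    exact h ▸ chi_mem_th I₂
  · exact (th_subset_th_of_chi_le (chi_le_chi_iff.2 h.symm)).antisymm
      (th_subset_th_of_chi_le (chi_le_chi_iff.2 h))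

/-- `(DMTS, χ, ≤)` is a behavioral specification theory for LTS adequate for
bisimilarity: with `I ⊨ D ⟺ χ(I) ≤ D`, every `χ(I)` is a characteristic formula for
`I`, and the induced equivalence `Th I₁ = Th I₂` coincides with bisimilarity. -/
theorem dmts_spec_theory_adequate_for_bisimilarity :
    (∀ I : LTS A, dmtsLe (chi I) (chi I) ∧
      ∀ I' : LTS A, dmtsLe (chi I') (chi I) →
        {D : DMTS A | dmtsLe (chi I') D} = {D : DMTS A | dmtsLe (chi I) D}) ∧
    (∀ I₁ I₂ : LTS A,
      {D : DMTS A | dmtsLe (chi I₁) D} = {D : DMTS A | dmtsLe (chi I₂) D} ↔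
        Bisimilar I₁ I₂) :=
  ⟨fun I => ⟨chi_mem_th I, fun _ h => th_eq_th_iff.2 (chi_le_chi_iff.1 h)⟩,
    fun _ _ => th_eq_th_iff⟩
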